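/- For every c ∈ ℂ and all f, u, g ∈ C∞₂π(ℝ,ℂ), one has ∫₀^{2π} (3·u·u′ + c·u‴)·g dx = −∫₀^{2π} u·(u·g′ − u′·g) dx − c·∫₀^{2π} u·g‴ dx. In other words, the Euler equation on the Virasoro algebra with central charge c and quadratic Hamiltonian H(u) = ½∫₀^{2π} u² dx (inertia operator the identity) is the Korteweg–de Vries equation u_t = 3·u·u_x + c·u_xxx: its right-hand side is characterized against every test vector field g by minus the sum of the pairing ⟨u,[u,g]⟩ and c times the Gelfand–Fuchs cocycle μ(u,g). -/

import Mathlib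

/-!
Both sides are pairings against `g`, and their difference integrates
`(3uu' + cu''')g + u(ug' - u'g) + cug''' = (u²g)' + c(u''g - u'g' + ug'')'`,
the derivative of a periodic function; its integral over a period vanishes.
-/

open Real intervalIntegral
open scoped ContDiff

section

variable {E : Type*} [NormedAddCommGroup E] [NormedSpace ℝ E]

theorem Function.Periodic.deriv {F : ℝ → E} {T : ℝ} (h : Function.Periodic F T) :
    Function.Periodic (_root_.deriv F) T :=
  fun x => by rw [← deriv_comp_add_const, funext h]

theorem Function.Periodic.integral_eq_zero_of_hasDerivAt [CompleteSpace E] {F f : ℝ → E} {T : ℝ}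
    (hF : Function.Periodic F T) (hderiv : ∀ x, HasDerivAt F (f x) x) (t : ℝ)
    (hf : IntervalIntegrable f MeasureTheory.volume t (t + T)) :
    ∫ x in t..t + T, f x = 0 := by
  rw [integral_eq_sub_of_hasDerivAt (fun x _ => hderiv x) hf, hF t, sub_self]

end

noncomputable def kdvPrimitive (c : ℂ) (u g : ℝ → ℂ) (x : ℝ) : ℂ :=
  u x ^ 2 * g x + c * (deriv (deriv u) x * g x - deriv u x * deriv g x + u x * deriv (deriv g) x)

theorem Function.Periodic.kdvPrimitive {u g : ℝ → ℂ} {T : ℝ} (hu : Function.Periodic u T)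
    (hg : Function.Periodic g T) (c : ℂ) : Function.Periodic (_root_.kdvPrimitive c u g) T :=
  fun x => by
    simp only [_root_.kdvPrimitive, hu x, hg x, hu.deriv x, hu.deriv.deriv x, hg.deriv x,
      hg.deriv.deriv x]

theorem hasDerivAt_kdvPrimitive (c : ℂ) {u g : ℝ → ℂ} (hu : ContDiff ℝ 3 u) (hg : ContDiff ℝ 3 g)
    (x : ℝ) :
    HasDerivAt (kdvPrimitive c u g)
      ((3 * u x * deriv u x + c * deriv (deriv (deriv u)) x) * g x
        + u x * (u x * deriv g x - deriv u x * g x) + c * (u x * deriv (deriv (deriv g)) x)) x := by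
  have hu₁ : ContDiff ℝ 2 (deriv u) := hu.deriv'
  have hg₁ : ContDiff ℝ 2 (deriv g) := hg.deriv'
  have hu₂ : ContDiff ℝ 1 (deriv (deriv u)) := hu₁.deriv'
  have hg₂ : ContDiff ℝ 1 (deriv (deriv g)) := hg₁.deriv'
  have hasDeriv {n : WithTop ℕ∞} {a : ℝ → ℂ} (ha : ContDiff ℝ n a) (hn : n ≠ 0) :
      HasDerivAt a (deriv a x) x :=
    (ha.differentiable hn x).hasDerivAt
  refine (((hasDeriv hu (by simp)).fun_pow 2).fun_mul (hasDeriv hg (by simp)) |>.add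
    (((((hasDeriv hu₂ one_ne_zero).fun_mul (hasDeriv hg (by simp))).sub
      ((hasDeriv hu₁ two_ne_zero).fun_mul (hasDeriv hg₁ two_ne_zero))).add
      ((hasDeriv hu (by simp)).fun_mul (hasDeriv hg₂ one_ne_zero))).const_mul c)).congr_deriv ?_
  push_cast
  ring

theorem kdv_is_euler_equation_on_virasoro (c : ℂ) (u g : ℝ → ℂ)
    (hu : ContDiff ℝ ∞ u) (hup : Function.Periodic u (2 * π))
    (hg : ContDiff ℝ ∞ g) (hgp : Function.Periodic g (2 * π)) :
    (∫ x in (0:ℝ)..(2 * π), (3 * u x * deriv u x + c * deriv (deriv (deriv u)) x) * g x)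
      = -(∫ x in (0:ℝ)..(2 * π), u x * (u x * deriv g x - deriv u x * g x))
        - c * ∫ x in (0:ℝ)..(2 * π), u x * deriv (deriv (deriv g)) x := by
  have hu₃ : ContDiff ℝ 3 u := hu.of_le (WithTop.coe_le_coe.mpr le_top)
  have hg₃ : ContDiff ℝ 3 g := hg.of_le (WithTop.coe_le_coe.mpr le_top)
  have := hu.continuous; have := hu.continuous_deriv (by simp)
  have : Continuous (deriv (deriv (deriv u))) := (hu.iterate_deriv 3).continuous
  have := hg.continuous; have := hg.continuous_deriv (by simp)
  have : Continuous (deriv (deriv (deriv g))) := (hg.iterate_deriv 3).continuous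
  have hzero := (hup.kdvPrimitive hgp c).integral_eq_zero_of_hasDerivAt
    (hasDerivAt_kdvPrimitive c hu₃ hg₃) 0 (Continuous.intervalIntegrable (by fun_prop) _ _)
  rw [zero_add, integral_add, integral_add, integral_const_mul] at hzero
  · linear_combination hzero
  all_goals exact Continuous.intervalIntegrable (by fun_prop) _ _
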